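/- arXiv:2605.10836 — 5 statements merged into one kernel-verified Lean document; each statement's English description precedes it below -/
import Mathlib

section
/- Let G be a graph and F ⊆ V(G) a fort, i.e., every vertex outside F has either 0 or at least 2 neighbors in F. If S ⊆ V(G) is disjoint from F, then S is not a zero forcing set of G (the zero forcing closure of S is not all of V(G)). -/
open SimpleGraph

/-- The zero forcing closure: `ZFClosure G S v` means vertex `v` eventually becomes blue
when starting from the blue set `S` and repeatedly applying the color-change rule:
a blue vertex with exactly one white neighbor forces that neighbor to become blue. -/
inductive ZFClosure {V : Type*} (G : SimpleGraph V) (S : Set V) : V → Prop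
  | init {v : V} : v ∈ S → ZFClosure G S v
  | force {u w : V} : ZFClosure G S u → G.Adj u w →
      (∀ x, G.Adj u x → x ≠ w → ZFClosure G S x) → ZFClosure G S w

/-- `S` is a zero forcing set of `G` if its closure is all of `V`. -/
def IsZeroForcing {V : Type*} (G : SimpleGraph V) (S : Set V) : Prop :=
  ∀ v, ZFClosure G S v

/-- `z(G;k)`: the number of zero forcing sets of size `k`. -/
noncomputable def zfCount {V : Type*} (G : SimpleGraph V) [Fintype V] (k : ℕ) : ℕ :=
  Nat.card {S : Finset V // S.card = k ∧ IsZeroForcing G ↑S}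

/-- `z'(G;k)`: the number of non-forcing `k`-subsets. -/
noncomputable def nfCount {V : Type*} (G : SimpleGraph V) [Fintype V] (k : ℕ) : ℕ :=
  Nat.card {S : Finset V // S.card = k ∧ ¬ IsZeroForcing G ↑S}

/-- A fort: every vertex outside `F` has `0` or at least `2` neighbors in `F`. -/
def IsFort {V : Type*} (G : SimpleGraph V) (F : Set V) : Prop :=
  ∀ v ∉ F, (∀ w ∈ F, ¬ G.Adj v w) ∨
    ∃ w₁ ∈ F, ∃ w₂ ∈ F, w₁ ≠ w₂ ∧ G.Adj v w₁ ∧ G.Adj v w₂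

/-- True twins: adjacent with the same neighbors outside the pair. -/
def TrueTwins {V : Type*} (G : SimpleGraph V) (u v : V) : Prop :=
  G.Adj u v ∧ ∀ w, w ≠ u → w ≠ v → (G.Adj u w ↔ G.Adj v w)

/-- False twins: distinct, nonadjacent, with the same open neighborhoods. -/
def FalseTwins {V : Type*} (G : SimpleGraph V) (u v : V) : Prop :=
  u ≠ v ∧ ¬ G.Adj u v ∧ ∀ w, G.Adj u w ↔ G.Adj v w

/-- A twin pair: true twins or false twins. -/
def TwinPair {V : Type*} (G : SimpleGraph V) (u v : V) : Prop :=
  TrueTwins G u v ∨ FalseTwins G u v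

/-- `G` is path-extremal: the path on the same number of vertices has
coefficientwise at least as many zero forcing sets of every size. -/
noncomputable def PathExtremal {V : Type*} (G : SimpleGraph V) [Fintype V] : Prop :=
  ∀ k : ℕ, zfCount G k ≤ zfCount (SimpleGraph.pathGraph (Fintype.card V)) k

/-- If `F` is a nonempty fort and `S` is disjoint from `F`, then `S` is not a
zero forcing set of `G`. -/
theorem stmt_0 {V : Type*} (G : SimpleGraph V) (F S : Set V)
    (hF : IsFort G F) (hne : F.Nonempty) (hdisj : Disjoint S F) :
    ¬ IsZeroForcing G S := by
  intro hzf
  obtain ⟨f, hf⟩ := hne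
  have key : ∀ v, ZFClosure G S v → v ∉ F := by
    intro v hv
    induction hv with
    | init h => exact fun hvF => hdisj.ne_of_mem h hvF rfl
    | @force u w hu hadj hall ihu ihall =>
      intro hwF
      rcases hF u ihu with h0 | ⟨w₁, hw₁, w₂, hw₂, hne12, ha1, ha2⟩
      · exact h0 w hwF hadj
      · rcases eq_or_ne w₁ w with rfl | h1
        · exact ihall w₂ ha2 (fun h => hne12 h.symm) hw₂
        · exact ihall w₁ ha1 h1 hw₁
  exact key f (hzf f) hf
end

section
/- For the path P_n on n vertices and every 0 ≤ k ≤ n, the number of k-subsets of V(P_n) that are not zero forcing sets equals C(n−k−1, k). Equivalently, the number of zero forcing sets of size k in P_n is C(n,k) − C(n−k−1, k). -/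
open SimpleGraph

/-!
A set `S` of vertices of `Pₙ` fails to force exactly when its complement is a fort, i.e. when
`S` avoids both endpoints and contains no two consecutive vertices: such a complement can never
be entered, while a blue endpoint or a blue edge propagates along the whole path. Shifting by one,
these sets are the `k`-subsets of `{0, …, n - 3}` with no two consecutive elements, which satisfy
Pascal's recursion for `C(m + 1 - k, k)` according to whether they contain the largest element.
-/

open Finset

section Fort

variable {V : Type*} {G : SimpleGraph V} {S F : Set V}

theorem ZFClosure.notMem_of_isFort (hF : IsFort G F) (hSF : Disjoint S F) {v : V}
    (hv : ZFClosure G S v) : v ∉ F := by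
  induction hv with
  | init hv => exact Set.disjoint_left.mp hSF hv
  | @force u w _ huw _ hu hothers =>
    intro hw
    rcases hF u hu with hnone | ⟨w₁, hw₁, w₂, hw₂, hne, hu₁, hu₂⟩
    · exact hnone w hw huw
    · by_cases h : w₁ = w
      · exact hothers w₂ hu₂ (h ▸ hne.symm) hw₂
      · exact hothers w₁ hu₁ h hw₁

theorem not_isZeroForcing_of_isFort (hF : IsFort G F) (hSF : Disjoint S F) {v : V} (hv : v ∈ F) :
    ¬ IsZeroForcing G S :=
  fun hS => (hS v).notMem_of_isFort hF hSF hv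

end Fort

theorem zfCount_add_nfCount {V : Type*} (G : SimpleGraph V) [Fintype V] (k : ℕ) :
    zfCount G k + nfCount G k = (Fintype.card V).choose k := by
  classical
  rw [zfCount, nfCount, Nat.card_eq_fintype_card, Nat.card_eq_fintype_card, Fintype.card_subtype,
    Fintype.card_subtype, ← card_univ, ← card_powersetCard, powersetCard_eq_filter, powerset_univ,
    ← card_filter_add_card_filter_not (s := univ.filter (·.card = k))
      (fun S : Finset V => IsZeroForcing G S), filter_filter, filter_filter]

section Path

variable {n : ℕ} {S : Set (Fin n)}

theorem isFort_pathGraph_compl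
    (hS : ∀ i ∈ S, (i : ℕ) ≠ 0 ∧ (i : ℕ) + 1 ≠ n ∧ ∀ j ∈ S, (i : ℕ) + 1 ≠ j) :
    IsFort (pathGraph n) Sᶜ := by
  intro v hv
  rw [Set.notMem_compl_iff] at hv
  obtain ⟨hv0, hvn, hsucc⟩ := hS v hv
  refine .inr ⟨⟨v - 1, by omega⟩, fun hm => (hS _ hm).2.2 v hv (by simp; omega),
    ⟨v + 1, by omega⟩, fun hp => hsucc _ hp rfl, ?_, ?_, ?_⟩
  · simp [Fin.ext_iff]
  · simp [pathGraph_adj]; omega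
  · simp [pathGraph_adj]

/-- Integer positions outside `0, …, n - 1` count as forced: they play the role of
always-blue neighbours of the two endpoints. -/
def IsForcedAt (S : Set (Fin n)) (a : ℤ) : Prop :=
  ∀ v : Fin n, ((v : ℕ) : ℤ) = a → ZFClosure (pathGraph n) S v

theorem isForcedAt_of_mem {i : Fin n} (hi : i ∈ S) : IsForcedAt S (i : ℕ) := by
  intro v hv
  obtain rfl : v = i := Fin.ext (by omega)
  exact .init hi

theorem isForcedAt_of_lt_zero_or_le {a : ℤ} (ha : a < 0 ∨ n ≤ a) : IsForcedAt S a := by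
  intro v hv
  omega

theorem IsForcedAt.add_two {a : ℤ} (ha : 0 ≤ a + 1) (h₀ : IsForcedAt S a)
    (h₁ : IsForcedAt S (a + 1)) : IsForcedAt S (a + 2) := by
  intro v hv
  refine .force (u := ⟨v - 1, by omega⟩) (h₁ _ (by simp; omega))
    (by simp [pathGraph_adj]; omega) fun x hx hxv => h₀ x ?_
  simp only [pathGraph_adj] at hx hxv
  omega

theorem IsForcedAt.of_add_two {a : ℤ} (ha : a + 1 < n) (h₁ : IsForcedAt S (a + 1))
    (h₂ : IsForcedAt S (a + 2)) : IsForcedAt S a := by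
  intro v hv
  refine .force (u := ⟨v + 1, by omega⟩) (h₁ _ (by simp; omega))
    (by simp [pathGraph_adj]) fun x hx hxv => h₂ x ?_
  simp only [pathGraph_adj] at hx hxv
  omega

theorem isZeroForcing_of_isForcedAt_pair {a : ℤ} (ha : -1 ≤ a) (ha' : a < n)
    (h₀ : IsForcedAt S a) (h₁ : IsForcedAt S (a + 1)) : IsZeroForcing (pathGraph n) S := by
  have up : ∀ b, a ≤ b → IsForcedAt S b ∧ IsForcedAt S (b + 1) := by
    refine Int.leInduction ⟨h₀, h₁⟩ fun b hb ih => ⟨ih.2, ?_⟩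
    simpa [add_assoc] using ih.1.add_two (by omega) ih.2
  have down : ∀ b, b ≤ a → IsForcedAt S b ∧ IsForcedAt S (b + 1) := by
    refine Int.leInductionDown ⟨h₀, h₁⟩ fun b hb ⟨hb₀, hb₁⟩ => ?_
    have e₁ : b - 1 + 1 = b := by ring
    have e₂ : b - 1 + 2 = b + 1 := by ring
    rw [e₁]
    exact ⟨.of_add_two (by omega) (by rwa [e₁]) (by rwa [e₂]), hb₀⟩
  intro v
  rcases le_total ((v : ℕ) : ℤ) a with h | h
  · exact (down _ h).1 v rfl
  · exact (up _ h).1 v rfl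

theorem isZeroForcing_pathGraph_iff (hn : 0 < n) :
    IsZeroForcing (pathGraph n) S ↔
      ∃ i ∈ S, (i : ℕ) = 0 ∨ (i : ℕ) + 1 = n ∨ ∃ j ∈ S, (i : ℕ) + 1 = j := by
  constructor
  · intro hS
    by_contra! h
    exact not_isZeroForcing_of_isFort (isFort_pathGraph_compl h) disjoint_compl_right
      (v := ⟨0, hn⟩) (fun h0 => (h _ h0).1 rfl) hS
  · rintro ⟨i, hi, h0 | hlast | ⟨j, hj, hij⟩⟩
    · exact isZeroForcing_of_isForcedAt_pair (a := -1) le_rfl (by omega)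
        (isForcedAt_of_lt_zero_or_le (by omega)) (by simpa [h0] using isForcedAt_of_mem hi)
    · exact isZeroForcing_of_isForcedAt_pair (a := (i : ℕ)) (by omega) (by omega)
        (isForcedAt_of_mem hi) (isForcedAt_of_lt_zero_or_le (by omega))
    · exact isZeroForcing_of_isForcedAt_pair (a := (i : ℕ)) (by omega) (by omega)
        (isForcedAt_of_mem hi) (by simpa [← hij] using isForcedAt_of_mem hj)

theorem not_isZeroForcing_pathGraph_iff (hn : 0 < n) :
    ¬ IsZeroForcing (pathGraph n) S ↔
      ∀ i ∈ S, (i : ℕ) ≠ 0 ∧ (i : ℕ) + 1 ≠ n ∧ ∀ j ∈ S, (i : ℕ) + 1 ≠ j := by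
  simp [isZeroForcing_pathGraph_iff hn]

end Path

section Sparse

def sparseSubsets (m k : ℕ) : Finset (Finset ℕ) :=
  ((range m).powersetCard k).filter fun T => ∀ i ∈ T, i + 1 ∉ T

theorem mem_sparseSubsets {m k : ℕ} {T : Finset ℕ} :
    T ∈ sparseSubsets m k ↔ (∀ i ∈ T, i < m) ∧ T.card = k ∧ ∀ i ∈ T, i + 1 ∉ T := by
  simp [sparseSubsets, subset_iff, and_assoc]

theorem filter_notMem_sparseSubsets (m k : ℕ) :
    (sparseSubsets (m + 1) k).filter (m ∉ ·) = sparseSubsets m k := by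
  ext T
  simp only [mem_filter, mem_sparseSubsets]
  constructor
  · rintro ⟨⟨hlt, hcard, hsep⟩, hm⟩
    exact ⟨fun i hi => lt_of_le_of_ne (Nat.lt_succ_iff.mp (hlt i hi)) (ne_of_mem_of_not_mem hi hm),
      hcard, hsep⟩
  · rintro ⟨hlt, hcard, hsep⟩
    exact ⟨⟨fun i hi => (hlt i hi).trans (Nat.lt_succ_self m), hcard, hsep⟩,
      fun hm => (hlt m hm).false⟩

theorem card_filter_mem_sparseSubsets (m k : ℕ) :
    ((sparseSubsets (m + 1) (k + 1)).filter (m ∈ ·)).card = (sparseSubsets (m - 1) k).card := by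
  refine card_nbij' (·.erase m) (insert m) ?_ ?_ ?_ ?_
  · intro T hT
    simp only [mem_coe, mem_filter, mem_sparseSubsets] at hT ⊢
    obtain ⟨⟨hlt, hcard, hsep⟩, hm⟩ := hT
    refine ⟨fun i hi => ?_, by rw [card_erase_of_mem hm, hcard, Nat.add_sub_cancel],
      fun i hi hi' => hsep i (mem_of_mem_erase hi) (mem_of_mem_erase hi')⟩
    have hne : i + 1 ≠ m := fun h => hsep i (mem_of_mem_erase hi) (h ▸ hm)
    have := hlt i (mem_of_mem_erase hi)
    have := ne_of_mem_erase hi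
    omega
  · intro T hT
    simp only [mem_coe, mem_filter, mem_sparseSubsets] at hT ⊢
    obtain ⟨hlt, hcard, hsep⟩ := hT
    have hm : m ∉ T := fun h => by have := hlt m h; omega
    refine ⟨⟨fun i hi => ?_, by rw [card_insert_of_notMem hm, hcard], fun i hi hi' => ?_⟩,
      mem_insert_self m T⟩
    · rcases mem_insert.mp hi with rfl | hi
      · omega
      · have := hlt i hi; omega
    · rcases mem_insert.mp hi with rfl | hi <;> rcases mem_insert.mp hi' with h | h
      · omega
      · have := hlt _ h; omega
      · have := hlt i hi; omega
      · exact hsep i hi h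
  · intro T hT
    rw [mem_coe, mem_filter] at hT
    exact insert_erase hT.2
  · intro T hT
    simp only [mem_coe, mem_sparseSubsets] at hT
    exact erase_insert fun h => by have := hT.1 m h; omega

theorem Nat.choose_succ_sub_eq (j k : ℕ) :
    (j + 1 - k).choose (k + 1) = (j - k).choose (k + 1) + (j - k).choose k := by
  rcases le_or_gt k j with h | h
  · rw [Nat.sub_add_comm h, Nat.choose_succ_succ', add_comm]
  · rw [Nat.sub_eq_zero_of_le h, Nat.sub_eq_zero_of_le h.le, Nat.choose_eq_zero_of_lt (by omega),
      Nat.choose_eq_zero_of_lt (by omega)]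

theorem card_sparseSubsets_succ_succ (m k : ℕ) :
    (sparseSubsets (m + 1) (k + 1)).card =
      (sparseSubsets m (k + 1)).card + (sparseSubsets (m - 1) k).card := by
  rw [← card_filter_add_card_filter_not (m ∈ ·), card_filter_mem_sparseSubsets,
    filter_notMem_sparseSubsets, add_comm]

theorem card_sparseSubsets : ∀ m k : ℕ, (sparseSubsets m k).card = (m + 1 - k).choose k
  | m, 0 => by simp [sparseSubsets, filter_singleton]
  | 0, k + 1 => by simp [sparseSubsets]
  | m + 1, k + 1 => by
    rw [card_sparseSubsets_succ_succ, card_sparseSubsets m (k + 1), card_sparseSubsets (m - 1) k]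
    rcases m with _ | m
    · cases k <;> simp
    · rw [show m + 1 + 1 + 1 - (k + 1) = m + 1 + 1 - k by omega,
        show m + 1 + 1 - (k + 1) = m + 1 - k by omega, show m + 1 - 1 + 1 - k = m + 1 - k by omega,
        Nat.choose_succ_sub_eq (m + 1) k]

end Sparse

section Shift

variable {n : ℕ}

def predImage (S : Finset (Fin n)) : Finset ℕ :=
  S.image fun i : Fin n => (i : ℕ) - 1

def succPreimage (n : ℕ) (T : Finset ℕ) : Finset (Fin n) :=
  univ.filter fun i => ∃ a ∈ T, a + 1 = (i : ℕ)

theorem mem_predImage {S : Finset (Fin n)} (hS : ∀ i ∈ S, (i : ℕ) ≠ 0) {a : ℕ} :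
    a ∈ predImage S ↔ ∃ i ∈ S, a + 1 = (i : ℕ) := by
  simp only [predImage, mem_image]
  refine exists_congr fun i => and_congr_right fun hi => ?_
  have := hS i hi
  omega

theorem mem_succPreimage {T : Finset ℕ} {i : Fin n} :
    i ∈ succPreimage n T ↔ ∃ a ∈ T, a + 1 = (i : ℕ) := by
  simp [succPreimage]

theorem card_predImage {S : Finset (Fin n)} (hS : ∀ i ∈ S, (i : ℕ) ≠ 0) :
    (predImage S).card = S.card :=
  card_image_of_injOn fun i hi j hj hij => by
    have := hS i hi; have := hS j hj; omega

theorem succPreimage_predImage {S : Finset (Fin n)} (hS : ∀ i ∈ S, (i : ℕ) ≠ 0) :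
    succPreimage n (predImage S) = S := by
  ext i
  simp only [mem_succPreimage, mem_predImage hS]
  constructor
  · rintro ⟨a, ⟨j, hj, hja⟩, hai⟩
    rwa [(Fin.ext (hja.symm.trans hai) : j = i)] at hj
  · intro hi
    have := hS i hi
    exact ⟨i - 1, ⟨i, hi, by omega⟩, by omega⟩

theorem predImage_succPreimage {T : Finset ℕ} (hT : ∀ a ∈ T, a + 1 < n) :
    predImage (succPreimage n T) = T := by
  ext a
  rw [mem_predImage fun i hi => by obtain ⟨b, -, hb⟩ := mem_succPreimage.mp hi; omega]
  simp only [mem_succPreimage]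
  constructor
  · rintro ⟨i, ⟨b, hb, hbi⟩, hai⟩
    rwa [show b = a by omega] at hb
  · exact fun ha => ⟨⟨a + 1, hT a ha⟩, ⟨a, ha, rfl⟩, rfl⟩

theorem predImage_mem_sparseSubsets {S : Finset (Fin n)}
    (hS : ∀ i ∈ S, (i : ℕ) ≠ 0 ∧ (i : ℕ) + 1 ≠ n ∧ ∀ j ∈ S, (i : ℕ) + 1 ≠ j) :
    predImage S ∈ sparseSubsets (n - 2) S.card := by
  have h0 : ∀ i ∈ S, (i : ℕ) ≠ 0 := fun i hi => (hS i hi).1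
  simp only [mem_sparseSubsets, mem_predImage h0]
  refine ⟨fun a ⟨i, hi, hai⟩ => ?_, card_predImage h0,
    fun a ⟨i, hi, hai⟩ ⟨j, hj, haj⟩ => (hS i hi).2.2 j hj (by omega)⟩
  have := (hS i hi).2.1
  omega

theorem card_succPreimage {m k : ℕ} {T : Finset ℕ} (hT : T ∈ sparseSubsets m k)
    (hmn : m + 1 ≤ n) :
    (succPreimage n T).card = k := by
  have h0 : ∀ i ∈ succPreimage n T, (i : ℕ) ≠ 0 := fun i hi => by
    obtain ⟨a, -, hai⟩ := mem_succPreimage.mp hi; omega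
  obtain ⟨hlt, hcard, -⟩ := mem_sparseSubsets.mp hT
  rw [← card_predImage h0, predImage_succPreimage fun a ha => by have := hlt a ha; omega, hcard]

theorem forall_mem_succPreimage {k : ℕ} {T : Finset ℕ} (hT : T ∈ sparseSubsets (n - 2) k) :
    ∀ i ∈ succPreimage n T, (i : ℕ) ≠ 0 ∧ (i : ℕ) + 1 ≠ n ∧
      ∀ j ∈ succPreimage n T, (i : ℕ) + 1 ≠ j := by
  obtain ⟨hlt, -, hsep⟩ := mem_sparseSubsets.mp hT
  intro i hi
  obtain ⟨a, ha, hai⟩ := mem_succPreimage.mp hi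
  refine ⟨by omega, by have := hlt a ha; omega, fun j hj hij => ?_⟩
  obtain ⟨b, hb, hbj⟩ := mem_succPreimage.mp hj
  exact hsep a ha (by rwa [show a + 1 = b by omega])

end Shift

theorem nfCount_pathGraph {n : ℕ} (hn : 0 < n) (k : ℕ) :
    nfCount (pathGraph n) k = (sparseSubsets (n - 2) k).card := by
  classical
  rw [nfCount, Nat.card_eq_fintype_card, Fintype.card_subtype]
  refine card_nbij' predImage (succPreimage n) ?_ ?_ ?_ ?_
  all_goals intro S hS
  all_goals simp only [mem_coe, mem_filter, mem_univ, true_and,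
    not_isZeroForcing_pathGraph_iff hn] at hS ⊢
  · exact hS.1 ▸ predImage_mem_sparseSubsets hS.2
  · exact ⟨card_succPreimage hS (by omega), forall_mem_succPreimage hS⟩
  · exact succPreimage_predImage fun i hi => (hS.2 i hi).1
  · have hlt := (mem_sparseSubsets.mp hS).1
    exact predImage_succPreimage fun a ha => by have := hlt a ha; omega

theorem stmt_2_general (n k : ℕ) (hn : 1 ≤ n) :
    nfCount (SimpleGraph.pathGraph n) k = Nat.choose (n - k - 1) k ∧
    zfCount (SimpleGraph.pathGraph n) k = Nat.choose n k - Nat.choose (n - k - 1) k := by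
  have hnf : nfCount (pathGraph n) k = (n - k - 1).choose k := by
    rw [nfCount_pathGraph hn, card_sparseSubsets]
    rcases k with _ | k
    · simp
    · congr 1
      omega
  refine ⟨hnf, ?_⟩
  have hsum := zfCount_add_nfCount (pathGraph n) k
  rw [Fintype.card_fin, hnf] at hsum
  omega

/-- For the path `Pₙ` (n ≥ 1) and `0 ≤ k ≤ n`: the number of non-forcing `k`-subsets
is `C(n-k-1, k)`, and the number of zero forcing sets of size `k` is
`C(n,k) - C(n-k-1, k)`. -/
theorem stmt_2 (n k : ℕ) (hn : 1 ≤ n) (hk : k ≤ n) :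
    nfCount (SimpleGraph.pathGraph n) k = Nat.choose (n - k - 1) k ∧
    zfCount (SimpleGraph.pathGraph n) k = Nat.choose n k - Nat.choose (n - k - 1) k :=
  stmt_2_general n k hn
end

section
/- Every distance-hereditary graph with at least two vertices contains either a leaf (a vertex of degree 1) or a twin pair (two true twins or two false twins). -/
open SimpleGraph

/-- `BuildDH G A`: the set `A` can be built up from a single vertex by pendant additions,
false-twin additions, and true-twin additions, with respect to the induced subgraph on `A`. -/
inductive BuildDH {V : Type*} (G : SimpleGraph V) : Set V → Prop
  | single (v : V) : BuildDH G {v}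
  | pendant {A : Set V} (u v : V) : BuildDH G A → v ∈ A → u ∉ A →
      (∀ w ∈ A, G.Adj u w ↔ w = v) → BuildDH G (insert u A)
  | falseTwin {A : Set V} (u v : V) : BuildDH G A → v ∈ A → u ∉ A →
      ¬ G.Adj u v → (∀ w ∈ A, G.Adj u w ↔ G.Adj v w) → BuildDH G (insert u A)
  | trueTwin {A : Set V} (u v : V) : BuildDH G A → v ∈ A → u ∉ A →
      G.Adj u v → (∀ w ∈ A, w ≠ v → (G.Adj u w ↔ G.Adj v w)) → BuildDH G (insert u A)

/-- A graph is distance-hereditary if it can be obtained from `K₁` by pendant,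
false-twin, and true-twin additions. -/
def DistanceHereditary {V : Type*} (G : SimpleGraph V) : Prop :=
  BuildDH G Set.univ

/-!
Look at the last vertex `u` added in a construction of the whole vertex set from `K₁`. With two or
more vertices the construction is not the bare `K₁`, so `u` was added as a pendant vertex (then it
is a leaf), or as a false or true twin of an earlier vertex `v` (then `u, v` is a twin pair).
-/

namespace BuildDH

variable {V : Type*} {G : SimpleGraph V} {A : Set V} {u v : V}

lemma isLeaf_of_pendant (hcov : insert u A = Set.univ) (hv : v ∈ A)
    (hadj : ∀ w ∈ A, G.Adj u w ↔ w = v) :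
    G.Adj u v ∧ ∀ w, G.Adj u w → w = v := by
  refine ⟨(hadj v hv).mpr rfl, fun w huw => ?_⟩
  obtain rfl | hw : w = u ∨ w ∈ A := Set.mem_insert_iff.mp (hcov ▸ Set.mem_univ w)
  · exact absurd huw (G.loopless.irrefl w)
  · exact (hadj w hw).mp huw

lemma falseTwins_of_falseTwin (hcov : insert u A = Set.univ) (hv : v ∈ A) (hu : u ∉ A)
    (hna : ¬ G.Adj u v) (hadj : ∀ w ∈ A, G.Adj u w ↔ G.Adj v w) :
    FalseTwins G u v := by
  refine ⟨fun h => hu (h ▸ hv), hna, fun w => ?_⟩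
  obtain rfl | hw : w = u ∨ w ∈ A := Set.mem_insert_iff.mp (hcov ▸ Set.mem_univ w)
  · exact iff_of_false (G.loopless.irrefl w) (fun h => hna h.symm)
  · exact hadj w hw

lemma trueTwins_of_trueTwin (hcov : insert u A = Set.univ) (ha : G.Adj u v)
    (hadj : ∀ w ∈ A, w ≠ v → (G.Adj u w ↔ G.Adj v w)) :
    TrueTwins G u v := by
  refine ⟨ha, fun w hwu hwv => ?_⟩
  obtain rfl | hw : w = u ∨ w ∈ A := Set.mem_insert_iff.mp (hcov ▸ Set.mem_univ w)
  · exact absurd rfl hwu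
  · exact hadj w hw hwv

end BuildDH

theorem DistanceHereditary.exists_leaf_or_twinPair {V : Type*} [Nontrivial V]
    {G : SimpleGraph V} (hdh : DistanceHereditary G) :
    (∃ x v : V, G.Adj x v ∧ ∀ w, G.Adj x w → w = v) ∨ (∃ u v : V, TwinPair G u v) := by
  unfold DistanceHereditary at hdh
  generalize hcov : (Set.univ : Set V) = U at hdh
  cases hdh with
  | single v =>
    obtain ⟨w, hwv⟩ := exists_ne v
    exact absurd (Set.mem_singleton_iff.mp (hcov ▸ Set.mem_univ w)) hwv
  | pendant u v _ hv _ hadj =>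
    exact .inl ⟨u, v, BuildDH.isLeaf_of_pendant hcov.symm hv hadj⟩
  | falseTwin u v _ hv hu hna hadj =>
    exact .inr ⟨u, v, .inr (BuildDH.falseTwins_of_falseTwin hcov.symm hv hu hna hadj)⟩
  | trueTwin u v _ _ _ ha hadj =>
    exact .inr ⟨u, v, .inl (BuildDH.trueTwins_of_trueTwin hcov.symm ha hadj)⟩

/-- Every distance-hereditary graph with at least two vertices contains a leaf
or a twin pair. -/
theorem stmt_7 {V : Type*} [Fintype V] (G : SimpleGraph V)
    (hdh : DistanceHereditary G) (h2 : 2 ≤ Fintype.card V) :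
    (∃ x v : V, G.Adj x v ∧ ∀ w, G.Adj x w → w = v) ∨
    (∃ u v : V, TwinPair G u v) := by
  have : Nontrivial V := Fintype.one_lt_card_iff_nontrivial.mp h2
  exact hdh.exists_leaf_or_twinPair
end

section
/- Every induced subgraph of a distance-hereditary graph is distance-hereditary. -/
open SimpleGraph

/-! Delete from a construction sequence of `G` every vertex outside `A`, inducting along the
sequence. When the vertex `u` added last lies in `A` but its partner `v` does not, either `u` was
pendant at `v`, so it is isolated among the remaining vertices, and an isolated vertex can always
be added (a false twin of the first vertex of the sequence); or `u` was a twin of `v`, so it has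
the adjacencies of `v` to the remaining vertices, and the transposition `(u v)` turns a
construction of these together with `v` into one with `u` in place of `v`. -/

namespace BuildDH

variable {V W : Type*} {G : SimpleGraph V}

theorem nonempty {B : Set V} (hB : BuildDH G B) : B.Nonempty := by
  cases hB with
  | single v => exact Set.singleton_nonempty v
  | _ u => exact Set.insert_nonempty u _

theorem image {H : SimpleGraph W} {B : Set V} (hB : BuildDH G B) {f : V → W}
    (hf : Set.InjOn f B) (hadj : ∀ a ∈ B, ∀ b ∈ B, H.Adj (f a) (f b) ↔ G.Adj a b) :
    BuildDH H (f '' B) := by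
  induction hB with
  | single v =>
    rw [Set.image_singleton]
    exact single (f v)
  | @pendant A u v _ hv hu hcond ih =>
    have hfA : BuildDH H (f '' A) :=
      ih (hf.mono (Set.subset_insert u A)) fun a ha b hb => hadj a (.inr ha) b (.inr hb)
    rw [Set.image_insert_eq]
    refine pendant (f u) (f v) hfA (Set.mem_image_of_mem f hv)
      (by rwa [hf.mem_image_iff (Set.subset_insert u A) (.inl rfl)]) ?_
    rintro _ ⟨w, hw, rfl⟩
    rw [hadj u (.inl rfl) w (.inr hw), hcond w hw, hf.eq_iff (.inr hw) (.inr hv)]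
  | @falseTwin A u v _ hv hu hnadj hcond ih =>
    have hfA : BuildDH H (f '' A) :=
      ih (hf.mono (Set.subset_insert u A)) fun a ha b hb => hadj a (.inr ha) b (.inr hb)
    rw [Set.image_insert_eq]
    refine falseTwin (f u) (f v) hfA (Set.mem_image_of_mem f hv)
      (by rwa [hf.mem_image_iff (Set.subset_insert u A) (.inl rfl)])
      (by rwa [hadj u (.inl rfl) v (.inr hv)]) ?_
    rintro _ ⟨w, hw, rfl⟩
    rw [hadj u (.inl rfl) w (.inr hw), hadj v (.inr hv) w (.inr hw), hcond w hw]
  | @trueTwin A u v _ hv hu hadj' hcond ih =>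
    have hfA : BuildDH H (f '' A) :=
      ih (hf.mono (Set.subset_insert u A)) fun a ha b hb => hadj a (.inr ha) b (.inr hb)
    rw [Set.image_insert_eq]
    refine trueTwin (f u) (f v) hfA (Set.mem_image_of_mem f hv)
      (by rwa [hf.mem_image_iff (Set.subset_insert u A) (.inl rfl)])
      (by rwa [hadj u (.inl rfl) v (.inr hv)]) ?_
    rintro _ ⟨w, hw, rfl⟩ hwv
    rw [hadj u (.inl rfl) w (.inr hw), hadj v (.inr hv) w (.inr hw),
      hcond w hw (ne_of_apply_ne f hwv)]

theorem insert_of_forall_not_adj {B : Set V} (hB : BuildDH G B) {z : V} (hz : z ∉ B)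
    (hzB : ∀ w ∈ B, ¬ G.Adj z w) : BuildDH G (insert z B) := by
  induction hB with
  | single v =>
    refine falseTwin z v (single v) rfl hz (hzB v rfl) fun w hw => ?_
    rw [hw]
    simpa using hzB v rfl
  | @pendant A u v _ hv hu hcond ih =>
    have hzA : BuildDH G (insert z A) := ih (hz <| .inr ·) fun w hw => hzB w (.inr hw)
    have huzA : u ∉ insert z A := by rintro (rfl | h); exacts [hz (.inl rfl), hu h]
    rw [Set.insert_comm]
    refine pendant u v hzA (.inr hv) huzA (Set.forall_mem_insert.mpr ⟨?_, hcond⟩)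
    simp only [G.adj_comm u, hzB u (.inl rfl), false_iff]
    rintro rfl
    exact hz (.inr hv)
  | @falseTwin A u v _ hv hu hnadj hcond ih =>
    have hzA : BuildDH G (insert z A) := ih (hz <| .inr ·) fun w hw => hzB w (.inr hw)
    have huzA : u ∉ insert z A := by rintro (rfl | h); exacts [hz (.inl rfl), hu h]
    rw [Set.insert_comm]
    refine falseTwin u v hzA (.inr hv) huzA hnadj (Set.forall_mem_insert.mpr ⟨?_, hcond⟩)
    simp only [G.adj_comm _ z, hzB u (.inl rfl), hzB v (.inr hv)]
  | @trueTwin A u v _ hv hu hadj hcond ih =>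
    have hzA : BuildDH G (insert z A) := ih (hz <| .inr ·) fun w hw => hzB w (.inr hw)
    have huzA : u ∉ insert z A := by rintro (rfl | h); exacts [hz (.inl rfl), hu h]
    rw [Set.insert_comm]
    refine trueTwin u v hzA (.inr hv) huzA hadj (Set.forall_mem_insert.mpr ⟨fun _ => ?_, hcond⟩)
    simp only [G.adj_comm _ z, hzB u (.inl rfl), hzB v (.inr hv)]

theorem replace {S : Set V} {u v : V} (h : BuildDH G (insert v S)) (hu : u ∉ S) (hv : v ∉ S)
    (huv : ∀ w ∈ S, G.Adj u w ↔ G.Adj v w) : BuildDH G (insert u S) := by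
  classical
  have hfix : ∀ w ∈ S, Equiv.swap v u w = w := fun w hw =>
    Equiv.swap_apply_of_ne_of_ne (ne_of_mem_of_not_mem hw hv) (ne_of_mem_of_not_mem hw hu)
  have himage : Equiv.swap v u '' insert v S = insert u S := by
    rw [Set.image_insert_eq, Equiv.swap_apply_left, Set.image_congr hfix, Set.image_id']
  rw [← himage]
  refine h.image (Equiv.swap v u).injective.injOn ?_
  rintro a (rfl | ha) b (rfl | hb)
  · simp
  · rw [Equiv.swap_apply_left, hfix b hb, huv b hb]
  · rw [Equiv.swap_apply_left, hfix a ha, G.adj_comm, huv a ha, G.adj_comm]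
  · rw [hfix a ha, hfix b hb]

theorem of_subset_insert {A B : Set V} {u : V}
    (hB : ∀ {A}, A ⊆ B → A.Nonempty → BuildDH G A)
    (hstep : ∀ {A}, A ⊆ B → A.Nonempty → u ∉ A → BuildDH G (insert u A))
    (hAB : A ⊆ insert u B) (hA : A.Nonempty) : BuildDH G A := by
  by_cases huA : u ∈ A
  · rw [← Set.insert_sdiff_self_of_mem huA]
    rcases (A \ {u}).eq_empty_or_nonempty with hAu | hAu
    · simpa [hAu] using single u
    · exact hstep (Set.sdiff_singleton_subset_iff.mpr hAB) hAu fun h => h.2 rfl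
  · exact hB (fun w hw => (hAB hw).resolve_left (ne_of_mem_of_not_mem hw huA)) hA

theorem of_subset {A B : Set V} (hB : BuildDH G B) (hAB : A ⊆ B) (hA : A.Nonempty) :
    BuildDH G A := by
  induction hB generalizing A with
  | single v => exact hA.subset_singleton_iff.mp hAB ▸ single v
  | pendant u v _ hv _ hcond ih =>
    refine of_subset_insert ih (fun {A'} hA'B hA' huA' => ?_) hAB hA
    by_cases hvA : v ∈ A'
    · exact pendant u v (ih hA'B hA') hvA huA' fun w hw => hcond w (hA'B hw)
    · exact (ih hA'B hA').insert_of_forall_not_adj huA' fun w hw h =>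
        hvA ((hcond w (hA'B hw)).mp h ▸ hw)
  | falseTwin u v _ hv _ hnadj hcond ih =>
    refine of_subset_insert ih (fun {A'} hA'B hA' huA' => ?_) hAB hA
    by_cases hvA : v ∈ A'
    · exact falseTwin u v (ih hA'B hA') hvA huA' hnadj fun w hw => hcond w (hA'B hw)
    · exact (ih (Set.insert_subset hv hA'B) (Set.insert_nonempty v A')).replace huA' hvA
        fun w hw => hcond w (hA'B hw)
  | trueTwin u v _ hv _ hadj hcond ih =>
    refine of_subset_insert ih (fun {A'} hA'B hA' huA' => ?_) hAB hA
    by_cases hvA : v ∈ A'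
    · exact trueTwin u v (ih hA'B hA') hvA huA' hadj fun w hw => hcond w (hA'B hw)
    · exact (ih (Set.insert_subset hv hA'B) (Set.insert_nonempty v A')).replace huA' hvA
        fun w hw => hcond w (hA'B hw) (ne_of_mem_of_not_mem hw hvA)

theorem induce {A : Set V} (hA : BuildDH G A) : BuildDH (G.induce A) Set.univ := by
  have : Nonempty A := hA.nonempty.to_subtype
  set f := Function.invFun (Subtype.val : A → V)
  have hf : ∀ x ∈ A, (f x : V) = x := fun x hx => Function.invFun_eq ⟨⟨x, hx⟩, rfl⟩
  have himage : f '' A = Set.univ := Set.eq_univ_of_forall fun a =>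
    ⟨a, a.2, Function.leftInverse_invFun Subtype.val_injective a⟩
  rw [← himage]
  refine hA.image (fun x hx y hy hxy => by rw [← hf x hx, ← hf y hy, hxy]) fun x hx y hy => ?_
  simp [hf x hx, hf y hy]

end BuildDH

/-- Every (nonempty) induced subgraph of a distance-hereditary graph is
distance-hereditary. -/
theorem stmt_10 {V : Type*} (G : SimpleGraph V) (hdh : DistanceHereditary G)
    (A : Set V) (hA : A.Nonempty) :
    DistanceHereditary (G.induce A) :=
  (hdh.of_subset (Set.subset_univ A) hA).induce
end

section
/- Every star K_{1,n−1} on n ≥ 3 vertices is path-extremal, and its zero forcing counts are: a set S is zero forcing in K_{1,n−1} if and only if S contains all but at most one of the leaves, and if S misses a leaf then |S| ≥ n−1 or S contains the center together with all other leaves; concretely z(K_{1,n−1};k) = 0 for k ≤ n−3, and z(K_{1,n−1};k) ≤ z(P_n;k) for all k. -/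
open SimpleGraph

/-- The star `K_{1,n-1}` on `Fin n`, with center `0`. -/
def starGraphFin (n : ℕ) : SimpleGraph (Fin n) where
  Adj i j := i ≠ j ∧ ((i : ℕ) = 0 ∨ (j : ℕ) = 0)
  symm := by
    constructor
    intro i j h
    exact ⟨h.1.symm, h.2.symm⟩
  loopless := by
    constructor
    intro i h
    exact h.1 rfl


section ZFAux

lemma not_closure_of_fort {V : Type*} {G : SimpleGraph V} {S F : Set V}
    (hF : IsFort G F) (hdisj : ∀ v ∈ F, v ∉ S) {v : V} (h : ZFClosure G S v) : v ∉ F := by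
  induction h with
  | init hv => exact fun hvF => hdisj _ hvF hv
  | @force u w hu hadj hall ihu ihall =>
    intro hwF
    rcases hF u ihu with hnone | ⟨w₁, hw₁, w₂, hw₂, hne, ha₁, ha₂⟩
    · exact hnone w hwF hadj
    · by_cases h1 : w₁ = w
      · exact ihall w₂ ha₂ (fun h2 => hne (h1.trans h2.symm)) hw₂
      · exact ihall w₁ ha₁ h1 hw₁

lemma closure_map {V V' : Type*} {G : SimpleGraph V} {G' : SimpleGraph V'} (e : V ≃ V')
    (he : ∀ u v, G.Adj u v ↔ G'.Adj (e u) (e v)) {S : Set V} {v : V}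
    (h : ZFClosure G S v) : ZFClosure G' (e '' S) (e v) := by
  induction h with
  | init hv => exact ZFClosure.init ⟨_, hv, rfl⟩
  | @force u w hu hadj hall ihu ihall =>
    refine ZFClosure.force ihu ((he _ _).1 hadj) ?_
    intro x hx hxw
    have h1 : G.Adj u (e.symm x) := by rw [he]; simpa using hx
    have h2 : e.symm x ≠ w := fun hh => hxw (by rw [← hh, e.apply_symm_apply])
    simpa using ihall _ h1 h2

lemma star_nonforcing {n : ℕ} {S : Set (Fin n)} {a b : Fin n}
    (ha : (a : ℕ) ≠ 0) (hb : (b : ℕ) ≠ 0) (hab : a ≠ b) (haS : a ∉ S) (hbS : b ∉ S) :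
    ¬ IsZeroForcing (starGraphFin n) S := by
  intro h
  have hfort : IsFort (starGraphFin n) {a, b} := by
    intro v hv
    by_cases hv0 : (v : ℕ) = 0
    · right
      refine ⟨a, by simp, b, by simp, hab, ⟨?_, Or.inl hv0⟩, ⟨?_, Or.inl hv0⟩⟩
      · exact fun hh => ha (hh ▸ hv0)
      · exact fun hh => hb (hh ▸ hv0)
    · left
      intro w hw hadj
      rcases hadj.2 with h0 | h0
      · exact hv0 h0
      · rcases hw with rfl | hw
        · exact ha h0
        · rw [Set.mem_singleton_iff] at hw
          exact hb (hw ▸ h0)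
  have hd : ∀ v ∈ ({a, b} : Set (Fin n)), v ∉ S := by
    rintro v (rfl | hv)
    · exact haS
    · rw [Set.mem_singleton_iff] at hv; exact hv ▸ hbS
  exact not_closure_of_fort hfort hd (h a) (Set.mem_insert _ _)

lemma star_struct {n : ℕ} (hn : 3 ≤ n) {S : Set (Fin n)}
    (h : IsZeroForcing (starGraphFin n) S) :
    ∃ i : Fin n, ∀ v : Fin n, v ∉ S → (v : ℕ) = 0 ∨ v = i := by
  by_cases hex : ∃ v : Fin n, v ∉ S ∧ (v : ℕ) ≠ 0
  · obtain ⟨i, hiS, hi0⟩ := hex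
    refine ⟨i, fun v hv => ?_⟩
    by_contra hcon
    push_neg at hcon
    exact star_nonforcing hcon.1 hi0 hcon.2 hv hiS h
  · push_neg at hex
    exact ⟨⟨0, by omega⟩, fun v hv => Or.inl (hex v hv)⟩

lemma path_forcing {n : ℕ} (hn : 4 ≤ n) (S : Set (Fin n)) (i : Fin n)
    (hmiss : ∀ v : Fin n, v ∉ S → (v : ℕ) = 0 ∨ v = i) :
    IsZeroForcing (pathGraph n) S := by
  have hS : ∀ v : Fin n, (v : ℕ) ≠ 0 → v ≠ i → ZFClosure (pathGraph n) S v := by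
    intro v h0 hi
    refine ZFClosure.init ?_
    by_contra hv
    rcases hmiss v hv with h | h
    · exact h0 h
    · exact hi h
  by_cases hi0 : (i : ℕ) = 0
  · -- only vertex 0 can be missing
    have hc0 : ZFClosure (pathGraph n) S ⟨0, by omega⟩ := by
      refine ZFClosure.force (hS ⟨1, by omega⟩ (by simp) ?_) ?_ ?_
      · intro h; rw [Fin.ext_iff] at h; simp at h; omega
      · rw [pathGraph_adj]; right; simp
      · intro x hx hxw
        rw [pathGraph_adj] at hx
        have hx0 : (x : ℕ) ≠ 0 := fun h => hxw (Fin.ext h)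
        have hx2 : (x : ℕ) = 2 := by simp at hx; omega
        refine hS x (by omega) ?_
        intro h; rw [Fin.ext_iff, hi0] at h; omega
    intro v
    by_cases hv0 : (v : ℕ) = 0
    · have : v = ⟨0, by omega⟩ := Fin.ext hv0
      rw [this]; exact hc0
    · refine hS v hv0 (fun h => hv0 (by rw [h]; exact hi0))
  · -- i ≠ 0
    have hci : ZFClosure (pathGraph n) S i := by
      by_cases h1 : (i : ℕ) = 1
      · refine ZFClosure.force (u := ⟨2, by omega⟩) (hS _ (by simp) ?_) ?_ ?_
        · intro h; rw [Fin.ext_iff] at h; simp at h; omega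
        · rw [pathGraph_adj]; right; simp [h1]
        · intro x hx hxi
          rw [pathGraph_adj] at hx
          have hxi : (x : ℕ) ≠ (i : ℕ) := fun h => hxi (Fin.ext h)
          have : (x : ℕ) = 3 := by simp at hx; omega
          refine hS x (by omega) (fun h => by rw [Fin.ext_iff] at h; omega)
      · by_cases hlast : (i : ℕ) + 1 = n
        · -- i = n - 1, use u = i - 1
          have hiv : 2 ≤ (i : ℕ) := by omega
          refine ZFClosure.force (u := ⟨(i : ℕ) - 1, by omega⟩) (hS _ (by simp; omega) ?_) ?_ ?_
          · intro h; rw [Fin.ext_iff] at h; simp at h; omega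
          · rw [pathGraph_adj]; left; simp; omega
          · intro x hx hxi
            rw [pathGraph_adj] at hx
            have hxi : (x : ℕ) ≠ (i : ℕ) := fun h => hxi (Fin.ext h)
            simp at hx
            have : (x : ℕ) = (i : ℕ) - 2 := by omega
            refine hS x (by omega) (fun h => by rw [Fin.ext_iff] at h; omega)
        · -- here i.val ≥ 2, i+1 < n : use u = i + 1
          have hiv : 2 ≤ (i : ℕ) := by omega
          have hilt : (i : ℕ) + 1 < n := by omega
          refine ZFClosure.force (u := ⟨(i : ℕ) + 1, hilt⟩) (hS _ (by simp) ?_) ?_ ?_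
          · intro h; rw [Fin.ext_iff] at h; simp at h
          · rw [pathGraph_adj]; right; simp
          · intro x hx hxi
            rw [pathGraph_adj] at hx
            have hxi : (x : ℕ) ≠ (i : ℕ) := fun h => hxi (Fin.ext h)
            simp at hx
            have : (x : ℕ) = (i : ℕ) + 2 := by omega
            refine hS x (by omega) (fun h => by rw [Fin.ext_iff] at h; omega)
    have hc0 : ZFClosure (pathGraph n) S ⟨0, by omega⟩ := by
      have hcu : ZFClosure (pathGraph n) S ⟨1, by omega⟩ := by
        by_cases h1 : (⟨1, by omega⟩ : Fin n) = i
        · rw [h1]; exact hci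
        · exact hS _ (by simp) h1
      refine ZFClosure.force hcu ?_ ?_
      · rw [pathGraph_adj]; right; simp
      · intro x hx hxw
        rw [pathGraph_adj] at hx
        have hx0 : (x : ℕ) ≠ 0 := fun h => hxw (Fin.ext h)
        simp at hx
        have : (x : ℕ) = 2 := by omega
        by_cases h2 : x = i
        · rw [h2]; exact hci
        · exact hS x (by omega) h2
    intro v
    by_cases hv0 : (v : ℕ) = 0
    · have : v = ⟨0, by omega⟩ := Fin.ext hv0
      rw [this]; exact hc0
    · by_cases hvi : v = i
      · rw [hvi]; exact hci
      · exact hS v hv0 hvi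

lemma count_le {n k : ℕ} (g : Fin n → Fin n) (hg : Function.Injective g)
    (hpres : ∀ S : Finset (Fin n), IsZeroForcing (starGraphFin n) ↑S →
      IsZeroForcing (pathGraph n) ↑(S.image g)) :
    zfCount (starGraphFin n) k ≤ zfCount (pathGraph n) k := by
  apply Nat.card_le_card_of_injective
    (f := fun S : {S : Finset (Fin n) // S.card = k ∧ IsZeroForcing (starGraphFin n) ↑S} =>
      (⟨S.1.image g, by rw [Finset.card_image_of_injective _ hg]; exact S.2.1,
        hpres S.1 S.2.2⟩ : {S : Finset (Fin n) // S.card = k ∧ IsZeroForcing (pathGraph n) ↑S}))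
  intro a b hab
  exact Subtype.ext (Finset.image_injective hg (congrArg Subtype.val hab))

lemma star3_iso : ∀ u v : Fin 3, (starGraphFin 3).Adj u v ↔
    (pathGraph 3).Adj (Equiv.swap 0 1 u) (Equiv.swap 0 1 v) := by
  intro u v
  fin_cases u <;> fin_cases v <;>
    simp [starGraphFin, pathGraph_adj, Equiv.swap_apply_def]

lemma count3 (k : ℕ) : zfCount (starGraphFin 3) k ≤ zfCount (pathGraph 3) k := by
  apply count_le (Equiv.swap 0 1) (Equiv.injective _)
  intro S h v
  rw [Finset.coe_image]
  have := closure_map (Equiv.swap 0 1) star3_iso (h ((Equiv.swap 0 1).symm v))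
  simpa using this

end ZFAux

/-- The star `K_{1,n-1}` (n ≥ 3) is path-extremal, and has no zero forcing set
of size `k ≤ n - 3`. -/
theorem stmt_19 (n : ℕ) (hn : 3 ≤ n) :
    PathExtremal (starGraphFin n) ∧
    ∀ k ≤ n - 3, zfCount (starGraphFin n) k = 0 := by
  constructor
  · intro k
    rw [show Fintype.card (Fin n) = n from Fintype.card_fin n]
    rcases eq_or_lt_of_le hn with h3 | h4
    · subst h3
      exact count3 k
    · apply count_le id Function.injective_id
      intro S hf
      rw [Finset.image_id]
      obtain ⟨i, hi⟩ := star_struct hn hf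
      exact path_forcing (by omega) _ i hi
  · intro k hk
    have hE : IsEmpty {S : Finset (Fin n) // S.card = k ∧ IsZeroForcing (starGraphFin n) ↑S} := by
      constructor
      rintro ⟨S, hc, hf⟩
      have h1 : (Finset.univ \ S).card = n - k := by
        rw [Finset.card_sdiff_of_subset (Finset.subset_univ _), Finset.card_univ, Fintype.card_fin, hc]
      have h2 : ((Finset.univ \ S).filter fun v : Fin n => ¬ (v : ℕ) ≠ 0).card ≤ 1 := by
        apply Finset.card_le_one.mpr
        intro x hx y hy
        simp only [Finset.mem_filter, not_not] at hx hy
        exact Fin.ext (hx.2.trans hy.2.symm)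
      have h3 := Finset.card_filter_add_card_filter_not
        (s := Finset.univ \ S) (p := fun v : Fin n => (v : ℕ) ≠ 0)
      have h4 : 1 < ((Finset.univ \ S).filter fun v : Fin n => (v : ℕ) ≠ 0).card := by omega
      obtain ⟨a, ha, b, hb, hab⟩ := Finset.one_lt_card.mp h4
      simp only [Finset.mem_filter, Finset.mem_sdiff] at ha hb
      exact star_nonforcing ha.2 hb.2 hab (by simpa using ha.1.2) (by simpa using hb.1.2) hf
    exact Nat.card_of_isEmpty
end
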